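/- If u_1,...,u_n is an sdp sequence for G and v_1,...,v_m is an sdp sequence for H, then the ordering (u_1,v_1),...,(u_n,v_1),(u_1,v_2),...,(u_n,v_2),...,(u_1,v_m),...,(u_n,v_m) is an sdp sequence for G □ H. -/

import Mathlib

open SimpleGraph

variable {α β : Type*}

/-- The lexicographic product `G[H]`. -/
def lexProd (G : SimpleGraph α) (H : SimpleGraph β) : SimpleGraph (α × β) where
  Adj p q := G.Adj p.1 q.1 ∨ (p.1 = q.1 ∧ H.Adj p.2 q.2)
  symm := by
    constructor
    rintro ⟨u, x⟩ ⟨v, y⟩ (h | ⟨h1, h2⟩)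
    · exact Or.inl h.symm
    · exact Or.inr ⟨h1.symm, h2.symm⟩
  loopless := by
    constructor
    rintro ⟨u, x⟩ (h | ⟨-, h⟩)
    · exact G.irrefl h
    · exact H.irrefl h

/-- The induced subgraph on `S` is an isometric subgraph of `G`. -/
def IsometricSet (G : SimpleGraph α) (S : Set α) : Prop :=
  ∀ a b : S, (G.induce S).edist a b = G.edist a.1 b.1

/-- The set of orders of isometric (induced) subgraphs of `G`. -/
def dpSet (G : SimpleGraph α) : Set ℕ :=
  {k | ∃ S : Finset α, S.card = k ∧ IsometricSet G ↑S}

/-- `G` is distance preserving. -/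
def IsDP [Fintype α] (G : SimpleGraph α) : Prop :=
  G.Connected ∧ ∀ i : ℕ, 1 ≤ i → i ≤ Fintype.card α → i ∈ dpSet G

/-- `l` is an sdp sequence for `G`. -/
def IsSdpList [Fintype α] (G : SimpleGraph α) (l : List α) : Prop :=
  l.Nodup ∧ (∀ v : α, v ∈ l) ∧
    ∀ s : ℕ, IsometricSet G {v : α | v ∉ l.take s}

/-- `G` is sequentially distance preserving. -/
def IsSDP [Fintype α] (G : SimpleGraph α) : Prop :=
  G.Connected ∧ ∃ l : List α, IsSdpList G l

/-!
Distances in `G □ H` are sums of the coordinate distances. Removing the first `n * q + r`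
vertices of the ordering (`n = |G|`, `r < n`) leaves the points `(u, v)` with `v` outside the
first `q` vertices of `H`, except the first `r` vertices of `G` in the layer `v = v_{q+1}`. Two
remaining points are joined inside this set by an L-shaped path of length the sum of the
coordinate distances: along a complete layer `G × {v}` (or, if both lie in the partial layer, along
what is left of it, which is isometric in `G`), then along a fibre `{u} × H'`, where `H'` is `H`
with its first `q` or `q + 1` vertices removed, isometric in `H` by hypothesis.
-/

namespace List

lemma flatMap_map_prod_eq_map_swap_product (l₁ : List α) (l₂ : List β) :
    (l₂.flatMap fun v => l₁.map fun u => (u, v)) = (l₂ ×ˢ l₁).map Prod.swap := by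
  simp [SProd.sprod, List.product, map_flatMap, Function.comp_def]

lemma take_flatMap_map_prod (l₁ : List α) {l₂ : List β} {q r : ℕ} (hq : q < l₂.length)
    (hr : r ≤ l₁.length) :
    (l₂.flatMap fun v => l₁.map fun u => (u, v)).take (l₁.length * q + r) =
      (l₂.take q).flatMap (fun v => l₁.map fun u => (u, v)) ++ (l₁.take r).map (·, l₂[q]) := by
  induction l₂ generalizing q with
  | nil => simp at hq
  | cons v l₂ ih =>
    cases q with
    | zero => simp [take_append_of_le_length, hr, map_take]
    | succ q =>
      rw [Nat.mul_succ, Nat.add_right_comm, Nat.add_comm, flatMap_cons, take_append, length_map,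
        Nat.add_sub_cancel_left, ih (Nat.lt_of_succ_lt_succ hq), take_of_length_le (by simp)]
      simp

lemma mem_take_flatMap_map_prod {l₁ : List α} {l₂ : List β} (h₁ : ∀ u, u ∈ l₁) {q r : ℕ}
    (hq : q < l₂.length) (hr : r ≤ l₁.length) (p : α × β) :
    p ∈ (l₂.flatMap fun v => l₁.map fun u => (u, v)).take (l₁.length * q + r) ↔
      p.2 ∈ l₂.take q ∨ (p.2 = l₂[q] ∧ p.1 ∈ l₁.take r) := by
  obtain ⟨u, v⟩ := p
  rw [take_flatMap_map_prod l₁ hq hr]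
  simp only [mem_append, mem_flatMap, mem_map, Prod.mk.injEq]
  grind

lemma setOf_notMem_take_add_one {l : List α} {q : ℕ} (hq : q < l.length) :
    {v | v ∉ l.take (q + 1)} = {v | v ∉ l.take q} \ {l[q]} := by
  ext v
  rw [take_add_one, getElem?_eq_getElem hq]
  simp only [Set.mem_sdiff, Set.mem_ofPred_eq, Set.mem_singleton_iff, mem_append]
  simp

end List

namespace SimpleGraph

variable {V W : Type*} {G : SimpleGraph V}

lemma Hom.edist_le {G' : SimpleGraph W} (f : G →g G') (u v : V) :
    G'.edist (f u) (f v) ≤ G.edist u v := by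
  rcases eq_or_ne (G.edist u v) ⊤ with h | h
  · exact h ▸ le_top
  · obtain ⟨p, hp⟩ := exists_walk_of_edist_ne_top h
    calc G'.edist (f u) (f v) ≤ (p.map f).length := SimpleGraph.edist_le _
      _ = G.edist u v := by simpa using hp

end SimpleGraph

open SimpleGraph

lemma isometricSet_of_forall_edist_induce_le {G : SimpleGraph α} {S : Set α}
    (h : ∀ a b : S, (G.induce S).edist a b ≤ G.edist a b) : IsometricSet G S := fun a b =>
  le_antisymm (h a b) ((Embedding.induce S).toHom.edist_le a b)

lemma isometricSet_univ (G : SimpleGraph α) : IsometricSet G Set.univ :=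
  isometricSet_of_forall_edist_induce_le fun a b =>
    Hom.edist_le (⟨fun u => ⟨u, trivial⟩, id⟩ : G →g G.induce Set.univ) a.1 b.1

section BoxProd

variable {G : SimpleGraph α} {H : SimpleGraph β}

lemma edist_induce_boxProd_row_le {S : Set (α × β)} {A : Set α} (hA : IsometricSet G A) {y : β}
    (hAS : ∀ u ∈ A, (u, y) ∈ S) {x x' : α} (hx : x ∈ A) (hx' : x' ∈ A) :
    ((G □ H).induce S).edist ⟨(x, y), hAS x hx⟩ ⟨(x', y), hAS x' hx'⟩ ≤ G.edist x x' := by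
  let f : G.induce A →g (G □ H).induce S :=
    ⟨fun u => ⟨(u, y), hAS u u.2⟩, fun h => Or.inl ⟨h, rfl⟩⟩
  exact (f.edist_le ⟨x, hx⟩ ⟨x', hx'⟩).trans_eq (hA _ _)

lemma edist_induce_boxProd_column_le {S : Set (α × β)} {B : Set β} (hB : IsometricSet H B) {x : α}
    (hBS : ∀ v ∈ B, (x, v) ∈ S) {y y' : β} (hy : y ∈ B) (hy' : y' ∈ B) :
    ((G □ H).induce S).edist ⟨(x, y), hBS y hy⟩ ⟨(x, y'), hBS y' hy'⟩ ≤ H.edist y y' := by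
  let f : H.induce B →g (G □ H).induce S :=
    ⟨fun v => ⟨(x, v.1), hBS v v.2⟩, fun h => Or.inr ⟨h, rfl⟩⟩
  exact (f.edist_le ⟨y, hy⟩ ⟨y', hy'⟩).trans_eq (hB _ _)

theorem isometricSet_boxProd_of_partial_row {A : Set α} {B : Set β} {b : β}
    (hA : IsometricSet G A) (hB : IsometricSet H B) (hBb : IsometricSet H (B \ {b})) :
    IsometricSet (G □ H) {p | p.2 ∈ B ∧ (p.2 = b → p.1 ∈ A)} := by
  set S : Set (α × β) := {p | p.2 ∈ B ∧ (p.2 = b → p.1 ∈ A)}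
  have off_row : ∀ p p' : S, p.1.2 ≠ b →
      ((G □ H).induce S).edist p p' ≤ G.edist p.1.1 p'.1.1 + H.edist p.1.2 p'.1.2 := by
    rintro ⟨⟨x, y⟩, hyB, -⟩ ⟨⟨x', y'⟩, hp'⟩ (hp : y ≠ b)
    have hrow : ∀ u ∈ Set.univ, (u, y) ∈ S := fun _ _ => ⟨hyB, fun h => absurd h hp⟩
    refine SimpleGraph.edist_triangle.trans (add_le_add
      (edist_induce_boxProd_row_le (isometricSet_univ G) hrow trivial trivial) ?_)
    by_cases hx' : x' ∈ A
    · have hcol : ∀ v ∈ B, (x', v) ∈ S := fun v hv => ⟨hv, fun _ => hx'⟩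
      exact edist_induce_boxProd_column_le hB hcol hyB hp'.1
    · have hcol : ∀ v ∈ B \ {b}, (x', v) ∈ S := fun v hv => ⟨hv.1, fun h => absurd h hv.2⟩
      exact edist_induce_boxProd_column_le hBb hcol ⟨hyB, hp⟩ ⟨hp'.1, fun h => hx' (hp'.2 h)⟩
  have on_row : ∀ p p' : S, p.1.2 = b → p'.1.2 = b →
      ((G □ H).induce S).edist p p' ≤ G.edist p.1.1 p'.1.1 + H.edist p.1.2 p'.1.2 := by
    rintro ⟨⟨x, y⟩, hyB, hxA⟩ ⟨⟨x', y'⟩, -, hx'A⟩ (hy : y = b) (hy' : y' = b)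
    obtain rfl : y = y' := hy.trans hy'.symm
    have hrow : ∀ u ∈ A, (u, y) ∈ S := fun u hu => ⟨hyB, fun _ => hu⟩
    simpa using edist_induce_boxProd_row_le hA hrow (hxA hy) (hx'A hy)
  refine isometricSet_of_forall_edist_induce_le fun p p' => ?_
  rw [edist_boxProd]
  by_cases hp : p.1.2 = b
  · by_cases hp' : p'.1.2 = b
    · exact on_row p p' hp hp'
    · rw [SimpleGraph.edist_comm, SimpleGraph.edist_comm (G := G), SimpleGraph.edist_comm (G := H)]
      exact off_row p' p hp'
  · exact off_row p p' hp

end BoxProd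

theorem stmt_12_general (G : SimpleGraph α) (H : SimpleGraph β)
    [Fintype α] [Fintype β]
    (lG : List α) (lH : List β)
    (hlG : IsSdpList G lG) (hlH : IsSdpList H lH) :
    IsSdpList (G □ H) (lH.flatMap fun v => lG.map fun u => (u, v)) := by
  obtain ⟨hGnd, hGmem, hGiso⟩ := hlG
  obtain ⟨hHnd, hHmem, hHiso⟩ := hlH
  have hprod := List.flatMap_map_prod_eq_map_swap_product lG lH
  refine ⟨hprod ▸ (hHnd.product hGnd).map Prod.swap_injective,
    fun p => by simp [hprod, hGmem, hHmem], fun s => ?_⟩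
  obtain hs | hs := le_or_gt (lG.length * lH.length) s
  · have hlen : (lH.flatMap fun v => lG.map fun u => (u, v)).length ≤ s := by
      simpa [hprod, List.length_product, Nat.mul_comm] using hs
    rintro ⟨p, hp⟩
    exact absurd (by rw [List.take_of_length_le hlen]; simp [hprod, hGmem, hHmem]) hp
  have hn : 0 < lG.length := Nat.pos_of_ne_zero fun h => by simp [h] at hs
  obtain ⟨q, r, hq, hr, rfl⟩ : ∃ q r, q < lH.length ∧ r < lG.length ∧ s = lG.length * q + r :=
    ⟨s / lG.length, s % lG.length, (Nat.div_lt_iff_lt_mul hn).2 (by linarith),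
      Nat.mod_lt _ hn, (Nat.div_add_mod s _).symm⟩
  have hS : {p | p ∉ (lH.flatMap fun v => lG.map fun u => (u, v)).take (lG.length * q + r)} =
      {p | p.2 ∈ {v | v ∉ lH.take q} ∧ (p.2 = lH[q] → p.1 ∈ {u | u ∉ lG.take r})} := by
    ext p
    simp only [Set.mem_ofPred_eq, List.mem_take_flatMap_map_prod hGmem hq hr.le]
    tauto
  rw [hS]
  refine isometricSet_boxProd_of_partial_row (hGiso r) (hHiso q) ?_
  simpa only [List.setOf_notMem_take_add_one hq] using hHiso (q + 1)

theorem stmt_12 (G : SimpleGraph α) (H : SimpleGraph β)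
    [Fintype α] [Fintype β] (hG : G.Connected) (hH : H.Connected)
    (lG : List α) (lH : List β)
    (hlG : IsSdpList G lG) (hlH : IsSdpList H lH) :
    IsSdpList (G □ H) (lH.flatMap fun v => lG.map fun u => (u, v)) :=
  stmt_12_general G H lG lH hlG hlH
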